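/- arXiv:0807.4252 — 5 statements merged into one kernel-verified Lean document; each statement's English description precedes it below -/
import Mathlib

section
/- Matrix mutation preserves skew-symmetrizability: if the principal n×n part B of an m×n integer matrix B̃ satisfies DB skew-symmetric for some diagonal matrix D with positive diagonal entries, then the principal part of μ_k(B̃) satisfies D·μ_k(B) skew-symmetric for the same D. -/
/-- Mutation of an `m × n` exchange matrix in direction `k`. -/
def matMut {m n : ℕ} (h : n ≤ m) (B : Matrix (Fin m) (Fin n) ℤ) (k : Fin n) :
    Matrix (Fin m) (Fin n) ℤ :=
  fun i j =>
    if i = Fin.castLE h k ∨ j = k then -B i j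
    else B i j + Int.sign (B i k) * max (B i k * B (Fin.castLE h k) j) 0

/-!
Twice the correction term of a mutation is `|b_ik| b_kj + b_ik |b_kj|`. Since `d_i b_ik = -d_k b_ki`
and `d_i |b_ik| = d_k |b_ki|`, multiplying this symmetric form by `d_i` lets the factor `d_k` pass
through the column `k` and come out as `-d_j` times the corresponding term of the `(j, i)` entry.
-/

theorem max_zero_add_max_zero_eq_add_abs {G : Type*} [AddCommGroup G] [LinearOrder G]
    [IsOrderedAddMonoid G] (x : G) : max x 0 + max x 0 = x + |x| := by
  rw [← max_zero_add_max_neg_zero_eq_abs_self x]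
  nth_rw 3 [← max_zero_sub_max_neg_zero_eq_self x]
  abel

theorem two_mul_sign_mul_max_mul_zero (a b : ℤ) :
    2 * (a.sign * max (a * b) 0) = |a| * b + a * |b| := by
  linear_combination a.sign * max_zero_add_max_zero_eq_add_abs (a * b)
    + b * Int.sign_mul_self_eq_abs a + |b| * Int.sign_mul_abs a + a.sign * abs_mul a b

theorem mul_abs_eq_of_mul_eq_neg_mul {R : Type*} [Ring R] [LinearOrder R] [IsOrderedRing R]
    {d d' x y : R} (hd : 0 ≤ d) (hd' : 0 ≤ d') (h : d * x = -(d' * y)) :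
    d * |x| = d' * |y| := by
  simpa [abs_mul, abs_of_nonneg hd, abs_of_nonneg hd'] using congrArg abs h

theorem mul_add_sign_mul_max_eq_neg {di dj dk p q a a' b b' : ℤ}
    (hdi : 0 ≤ di) (hdj : 0 ≤ dj) (hdk : 0 ≤ dk) (hpq : di * p = -(dj * q))
    (hik : di * a = -(dk * a')) (hkj : dk * b = -(dj * b')) :
    di * (p + a.sign * max (a * b) 0) = -(dj * (q + b'.sign * max (b' * a') 0)) := by
  have habs_ik := mul_abs_eq_of_mul_eq_neg_mul hdi hdk hik
  have habs_kj := mul_abs_eq_of_mul_eq_neg_mul hdk hdj hkj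
  refine mul_left_cancel₀ (two_ne_zero (α := ℤ)) ?_
  linear_combination 2 * hpq + b * habs_ik + |a'| * hkj + |b| * hik - a' * habs_kj
    + di * two_mul_sign_mul_max_mul_zero a b + dj * two_mul_sign_mul_max_mul_zero b' a'

/-- Matrix mutation preserves skew-symmetrizability, with the same
skew-symmetrizing diagonal matrix `D = diag(d)`. -/
theorem matrix_mutation_preserves_skew_symmetrizable {m n : ℕ} (h : n ≤ m)
    (B : Matrix (Fin m) (Fin n) ℤ) (d : Fin n → ℤ) (hd : ∀ i, 0 < d i)
    (hskew : ∀ i j : Fin n,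
      d i * B (Fin.castLE h i) j = -(d j * B (Fin.castLE h j) i))
    (k : Fin n) :
    ∀ i j : Fin n,
      d i * (matMut h B k) (Fin.castLE h i) j
        = -(d j * (matMut h B k) (Fin.castLE h j) i) := by
  intro i j
  simp only [matMut, Fin.castLE_inj]
  by_cases hc : i = k ∨ j = k
  · rw [if_pos hc, if_pos hc.symm]
    linear_combination -hskew i j
  · rw [if_neg hc, if_neg (mt Or.symm hc)]
    exact mul_add_sign_mul_max_eq_neg (hd i).le (hd j).le (hd k).le
      (hskew i j) (hskew i k) (hskew k j)
end

section
/- Define a sequence of 3×3 integer matrices C^{(r)} (rows indexed by -1,-2,-3, columns by 1,2,3) by the recurrence: if r is even, C^{(r+1)}_{i,1} = -C^{(r)}_{i,1}, C^{(r+1)}_{i,2} = -C^{(r)}_{i,2}, C^{(r+1)}_{-1,3} = C^{(r)}_{-1,3} - [C^{(r)}_{-1,1}]_- - 3[C^{(r)}_{-1,2}]_-, C^{(r+1)}_{-2,3} = C^{(r)}_{-2,3} - [C^{(r)}_{-2,1}]_- - [C^{(r)}_{-2,2}]_-, C^{(r+1)}_{-3,3} = C^{(r)}_{-3,3} - [C^{(r)}_{-3,1}]_-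 - 3[C^{(r)}_{-3,2}]_-; and if r is odd, C^{(r+1)}_{i,3} = -C^{(r)}_{i,3}, C^{(r+1)}_{i,1} = C^{(r)}_{i,1} - [C^{(r)}_{i,3}]_- for all i, C^{(r+1)}_{-1,2} = C^{(r)}_{-1,2} - [C^{(r)}_{-1,3}]_-, C^{(r+1)}_{-2,2} = C^{(r)}_{-2,2} - 3[C^{(r)}_{-2,3}]_-, C^{(r+1)}_{-3,2} = C^{(r)}_{-3,2} - [C^{(r)}_{-3,3}]_-, with initial value C^{(0)} = [[1,0,0],[-1,-1,1],[0,-1,1]]. Then the row C^{(r)}_{-2} is periodic with period 4 in r ∈ Z: C^{(r)}_{-2} = (-1,-1,1) if r ≡ 0 mod 4, (1,1,-1) if r ≡ 1 mod 4, (0,-2,1) if r ≡ 2 mod 4, and (0,2,-1) if r ≡ 3 mod 4. -/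
/-- `[x]_- = max(0, -x)`. -/
def nPart (x : ℤ) : ℤ := max 0 (-x)

/-- The bipartite-belt step applied when `r` is even: columns `1` and `2`
change sign, and column `3` is updated. -/
def stepEven (C : Matrix (Fin 3) (Fin 3) ℤ) : Matrix (Fin 3) (Fin 3) ℤ :=
  Matrix.of fun i j =>
    if j = 2 then C i 2 - nPart (C i 0) - ![3, 1, 3] i * nPart (C i 1)
    else -C i j

/-- The bipartite-belt step applied when `r` is odd: column `3` changes sign,
and columns `1` and `2` are updated. -/
def stepOdd (C : Matrix (Fin 3) (Fin 3) ℤ) : Matrix (Fin 3) (Fin 3) ℤ :=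
  Matrix.of fun i j =>
    if j = 2 then -C i 2
    else if j = 0 then C i 0 - nPart (C i 2)
    else C i 1 - ![1, 3, 1] i * nPart (C i 2)

/-- The initial value `C⁽⁰⁾`; rows are indexed by `(-1,-2,-3)`, columns by `(1,2,3)`. -/
def C0 : Matrix (Fin 3) (Fin 3) ℤ := !![1, 0, 0; -1, -1, 1; 0, -1, 1]

/-!
Both belt steps act on each row separately, so the row indexed by `-2` follows a recurrence of
its own. Each step is injective on rows (the signs flipped first determine the rest), so a
solution of that recurrence on `ℤ` is determined by its value at `0`; the `4`-periodic candidate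
solves it and starts at `C⁽⁰⁾₋₂ = (-1,-1,1)`.
-/

theorem eq_of_injective_recurrence {α : Type*} (f : ℤ → α → α) (hf : ∀ r, (f r).Injective)
    {x y : ℤ → α} (hx : ∀ r, x (r + 1) = f r (x r)) (hy : ∀ r, y (r + 1) = f r (y r))
    (h0 : x 0 = y 0) : x = y := by
  funext r
  induction r using Int.induction_on with
  | zero => exact h0
  | succ n ih => rw [hx, hy, ih]
  | pred n ih =>
    apply hf (-n - 1)
    rw [← hx, ← hy, sub_add_cancel, ih]

def evenRow (a : ℤ) (v : Fin 3 → ℤ) : Fin 3 → ℤ :=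
  fun j => if j = 2 then v 2 - nPart (v 0) - a * nPart (v 1) else -v j

def oddRow (b : ℤ) (v : Fin 3 → ℤ) : Fin 3 → ℤ :=
  fun j => if j = 2 then -v 2 else if j = 0 then v 0 - nPart (v 2) else v 1 - b * nPart (v 2)

theorem stepEven_apply (C : Matrix (Fin 3) (Fin 3) ℤ) (i : Fin 3) :
    stepEven C i = evenRow (![3, 1, 3] i) (C i) := rfl

theorem stepOdd_apply (C : Matrix (Fin 3) (Fin 3) ℤ) (i : Fin 3) :
    stepOdd C i = oddRow (![1, 3, 1] i) (C i) := rfl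

theorem evenRow_injective (a : ℤ) : (evenRow a).Injective := by
  intro v w h
  have h0 : v 0 = w 0 := by simpa [evenRow] using congrFun h 0
  have h1 : v 1 = w 1 := by simpa [evenRow] using congrFun h 1
  have h2 : v 2 = w 2 := by simpa [evenRow, h0, h1] using congrFun h 2
  funext j
  fin_cases j <;> assumption

theorem oddRow_injective (b : ℤ) : (oddRow b).Injective := by
  intro v w h
  have h2 : v 2 = w 2 := by simpa [oddRow] using congrFun h 2
  have h0 : v 0 = w 0 := by simpa [oddRow, h2] using congrFun h 0
  have h1 : v 1 = w 1 := by simpa [oddRow, h2] using congrFun h 1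
  funext j
  fin_cases j <;> assumption

def beltRow (r : ℤ) : (Fin 3 → ℤ) → Fin 3 → ℤ :=
  if Even r then evenRow 1 else oddRow 3

theorem beltRow_injective (r : ℤ) : (beltRow r).Injective := by
  unfold beltRow
  split_ifs
  exacts [evenRow_injective 1, oddRow_injective 3]

def periodicRow (r : ℤ) : Fin 3 → ℤ :=
  if r % 4 = 0 then ![-1, -1, 1]
  else if r % 4 = 1 then ![1, 1, -1]
  else if r % 4 = 2 then ![0, -2, 1]
  else ![0, 2, -1]

theorem periodicRow_succ (r : ℤ) : periodicRow (r + 1) = beltRow r (periodicRow r) := by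
  have hpar : r % 2 = r % 4 % 2 := by omega
  have hsucc : (r + 1) % 4 = (r % 4 + 1) % 4 := by omega
  have hcases : r % 4 = 0 ∨ r % 4 = 1 ∨ r % 4 = 2 ∨ r % 4 = 3 := by omega
  funext j
  rcases hcases with hc | hc | hc | hc <;>
    fin_cases j <;>
    simp [periodicRow, beltRow, Int.even_iff, hpar, hsucc, hc, evenRow, oddRow, nPart]

/-- The row of `C⁽ʳ⁾` indexed by `-2` is `4`-periodic in `r ∈ ℤ`. -/
theorem C_row_neg2_periodic (C : ℤ → Matrix (Fin 3) (Fin 3) ℤ) (h0 : C 0 = C0)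
    (hrec : ∀ r : ℤ, C (r + 1) = if Even r then stepEven (C r) else stepOdd (C r)) :
    ∀ r : ℤ, ∀ j : Fin 3,
      C r 1 j =
        (if r % 4 = 0 then ![-1, -1, 1]
         else if r % 4 = 1 then ![1, 1, -1]
         else if r % 4 = 2 then ![0, -2, 1]
         else ![0, 2, -1]) j := by
  have hrow : ∀ r, C (r + 1) 1 = beltRow r (C r 1) := by
    intro r
    rw [hrec r, beltRow]
    split_ifs
    exacts [stepEven_apply _ 1, stepOdd_apply _ 1]
  have hstart : C 0 1 = periodicRow 0 := by
    rw [h0]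
    decide
  have hsol := eq_of_injective_recurrence beltRow beltRow_injective (x := fun r ↦ C r 1)
    hrow periodicRow_succ hstart
  intro r j
  exact congrFun (congrFun hsol r) j
end

section
/- With C^{(r)} as defined by the bipartite-belt recurrence with initial value C^{(0)} = [[1,0,0],[-1,-1,1],[0,-1,1]], for all r ≥ 1 the row C^{(r)}_{-1} satisfies: C^{(r)}_{-1,2} = (-1)^{r+1}·⌊r/4⌋ and C^{(r)}_{-1,3} = (-1)^r·(⌈r/2⌉ - 1). -/
/-! Row `-1` of `C⁽ʳ⁺¹⁾` depends only on row `-1` of `C⁽ʳ⁾`. Along the orbit from `C⁽⁰⁾`, every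
entry fed into `[·]_-` is nonpositive from `r = 1` on, so each step acts linearly there; the row
at `r = 4m + 1` is `(m - 1, m, -2m)`, and four linear steps carry it to the same shape at `m + 1`.
The two formulas are then read off the four rows of one period. -/

lemma nPart_of_nonpos {x : ℤ} (h : x ≤ 0) : nPart x = -x := by
  simp only [nPart]; omega

lemma stepEven_row_zero {C : Matrix (Fin 3) (Fin 3) ℤ} {a b c : ℤ} (h : C 0 = ![a, b, c])
    (ha : a ≤ 0) (hb : b ≤ 0) : stepEven C 0 = ![-a, -b, c + a + 3 * b] := by
  ext j
  fin_cases j <;> simp [stepEven, h, nPart_of_nonpos, ha, hb]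

lemma stepOdd_row_zero {C : Matrix (Fin 3) (Fin 3) ℤ} {a b c : ℤ} (h : C 0 = ![a, b, c])
    (hc : c ≤ 0) : stepOdd C 0 = ![a + c, b + c, -c] := by
  ext j
  fin_cases j <;> simp [stepOdd, h, nPart_of_nonpos, hc]

section
variable (C : ℤ → Matrix (Fin 3) (Fin 3) ℤ)
  (hrec : ∀ r : ℤ, C (r + 1) = if Even r then stepEven (C r) else stepOdd (C r))
include hrec

lemma succ_eq_stepOdd {r : ℤ} (hr : Odd r) : C (r + 1) = stepOdd (C r) := by
  rw [hrec, if_neg (Int.not_even_iff_odd.mpr hr)]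

lemma succ_eq_stepEven {r : ℤ} (hr : Even r) : C (r + 1) = stepEven (C r) := by
  rw [hrec, if_pos hr]

lemma row_zero_next_four {m : ℤ} (hm : 0 ≤ m) (h1 : C (4 * m + 1) 0 = ![m - 1, m, -(2 * m)]) :
    C (4 * m + 2) 0 = ![-(m + 1), -m, 2 * m] ∧
    C (4 * m + 3) 0 = ![m + 1, m, -(2 * m + 1)] ∧
    C (4 * m + 4) 0 = ![-m, -(m + 1), 2 * m + 1] ∧
    C (4 * (m + 1) + 1) 0 = ![m + 1 - 1, m + 1, -(2 * (m + 1))] := by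
  have h2 : C (4 * m + 2) 0 = ![-(m + 1), -m, 2 * m] := by
    rw [show 4 * m + 2 = 4 * m + 1 + 1 by ring, succ_eq_stepOdd C hrec ⟨2 * m, by ring⟩,
      stepOdd_row_zero h1 (by omega)]
    simp only [Matrix.vecCons_inj, and_true]
    omega
  have h3 : C (4 * m + 3) 0 = ![m + 1, m, -(2 * m + 1)] := by
    rw [show 4 * m + 3 = 4 * m + 2 + 1 by ring, succ_eq_stepEven C hrec ⟨2 * m + 1, by ring⟩,
      stepEven_row_zero h2 (by omega) (by omega)]
    simp only [Matrix.vecCons_inj, and_true]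
    omega
  have h4 : C (4 * m + 4) 0 = ![-m, -(m + 1), 2 * m + 1] := by
    rw [show 4 * m + 4 = 4 * m + 3 + 1 by ring, succ_eq_stepOdd C hrec ⟨2 * m + 1, by ring⟩,
      stepOdd_row_zero h3 (by omega)]
    simp only [Matrix.vecCons_inj, and_true]
    omega
  have h5 : C (4 * (m + 1) + 1) 0 = ![m + 1 - 1, m + 1, -(2 * (m + 1))] := by
    rw [show 4 * (m + 1) + 1 = 4 * m + 4 + 1 by ring,
      succ_eq_stepEven C hrec ⟨2 * m + 2, by ring⟩, stepEven_row_zero h4 (by omega) (by omega)]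
    simp only [Matrix.vecCons_inj, and_true]
    omega
  exact ⟨h2, h3, h4, h5⟩

lemma row_zero_four_mul_add_one (h0 : C 0 = C0) (m : ℕ) :
    C (4 * m + 1) 0 = ![(m : ℤ) - 1, m, -(2 * m)] := by
  induction m with
  | zero =>
    rw [show 4 * ((0 : ℕ) : ℤ) + 1 = 0 + 1 by simp, hrec, if_pos Even.zero, h0]
    decide
  | succ m ih =>
    push_cast
    exact (row_zero_next_four C hrec m.cast_nonneg ih).2.2.2
end

/-- For `r ≥ 1`, the row of `C⁽ʳ⁾` indexed by `-1` satisfies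
`C⁽ʳ⁾₍₋₁,₂₎ = (-1)^(r+1)·⌊r/4⌋` and `C⁽ʳ⁾₍₋₁,₃₎ = (-1)^r·(⌈r/2⌉ - 1)`. -/
theorem C_row_neg1_formula (C : ℤ → Matrix (Fin 3) (Fin 3) ℤ) (h0 : C 0 = C0)
    (hrec : ∀ r : ℤ, C (r + 1) = if Even r then stepEven (C r) else stepOdd (C r)) :
    ∀ r : ℕ, 1 ≤ r →
      C (r : ℤ) 0 1 = (-1 : ℤ) ^ (r + 1) * ((r / 4 : ℕ) : ℤ) ∧
      C (r : ℤ) 0 2 = (-1 : ℤ) ^ r * ((((r + 1) / 2 : ℕ) : ℤ) - 1) := by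
  intro r hr
  obtain ⟨m, j, hj, rfl⟩ : ∃ m j : ℕ, j < 4 ∧ r = 4 * m + 1 + j :=
    ⟨(r - 1) / 4, (r - 1) % 4, Nat.mod_lt _ (by norm_num), by omega⟩
  have h1 := row_zero_four_mul_add_one C hrec h0 m
  obtain ⟨h2, h3, h4, -⟩ := row_zero_next_four C hrec m.cast_nonneg h1
  simp only [neg_one_pow_eq_ite, Nat.even_iff]
  interval_cases j <;> push_cast
  all_goals
    simp only [add_assoc, Nat.reduceAdd, Int.reduceAdd, add_zero, h1, h2, h3, h4,
      Matrix.cons_val_zero, Matrix.cons_val_one, Matrix.cons_val_two, Matrix.head_cons,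
      Matrix.tail_cons]
    split_ifs <;> omega
end

section
/- With C^{(r)} as in the bipartite-belt recurrence with initial value C^{(0)} = [[1,0,0],[-1,-1,1],[0,-1,1]] (extended to all integers r), the rows indexed by -1 and -3 satisfy C^{(r)}_{-3} = C^{(r+4)}_{-1} for all r ∈ Z. -/
def evenRowStep (b : ℤ) (v : Fin 3 → ℤ) : Fin 3 → ℤ :=
  ![-v 0, -v 1, v 2 - nPart (v 0) - b * nPart (v 1)]

def oddRowStep (c : ℤ) (v : Fin 3 → ℤ) : Fin 3 → ℤ :=
  ![v 0 - nPart (v 2), v 1 - c * nPart (v 2), -v 2]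

lemma stepEven_row (C : Matrix (Fin 3) (Fin 3) ℤ) (i : Fin 3) :
    stepEven C i = evenRowStep (![3, 1, 3] i) (C i) := by
  funext j
  fin_cases j <;> simp [stepEven, evenRowStep]

lemma stepOdd_row (C : Matrix (Fin 3) (Fin 3) ℤ) (i : Fin 3) :
    stepOdd C i = oddRowStep (![1, 3, 1] i) (C i) := by
  funext j
  fin_cases j <;> simp [stepOdd, oddRowStep]

lemma evenRowStep_injective (b : ℤ) : Function.Injective (evenRowStep b) := by
  intro v w h
  have h0 : v 0 = w 0 := by simpa [evenRowStep] using congrFun h 0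
  have h1 : v 1 = w 1 := by simpa [evenRowStep] using congrFun h 1
  have h2 : v 2 = w 2 := by simpa [evenRowStep, h0, h1] using congrFun h 2
  funext j
  fin_cases j <;> assumption

lemma oddRowStep_injective (c : ℤ) : Function.Injective (oddRowStep c) := by
  intro v w h
  have h2 : v 2 = w 2 := by simpa [oddRowStep] using congrFun h 2
  have h0 : v 0 = w 0 := by simpa [oddRowStep, h2] using congrFun h 0
  have h1 : v 1 = w 1 := by simpa [oddRowStep, h2] using congrFun h 1
  funext j
  fin_cases j <;> assumption

def beltStep (r : ℤ) (C : Matrix (Fin 3) (Fin 3) ℤ) : Matrix (Fin 3) (Fin 3) ℤ :=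
  if Even r then stepEven C else stepOdd C

lemma beltStep_add_four (r : ℤ) : beltStep (r + 4) = beltStep r := by
  have : Even (r + 4) ↔ Even r := by simp [Int.even_add, (by decide : Even (4 : ℤ))]
  funext C
  simp only [beltStep, this]

lemma beltStep_row_two_eq_row_zero_iff (r : ℤ) {A B : Matrix (Fin 3) (Fin 3) ℤ} :
    beltStep r A 2 = beltStep r B 0 ↔ A 2 = B 0 := by
  unfold beltStep
  split_ifs
  · rw [stepEven_row, stepEven_row]
    exact (evenRowStep_injective 3).eq_iff
  · rw [stepOdd_row, stepOdd_row]
    exact (oddRowStep_injective 1).eq_iff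

/-- The rows of `C⁽ʳ⁾` indexed by `-3` and `-1` satisfy `C⁽ʳ⁾₋₃ = C⁽ʳ⁺⁴⁾₋₁`
for all `r ∈ ℤ`. -/
theorem C_row_neg3_eq_shift (C : ℤ → Matrix (Fin 3) (Fin 3) ℤ) (h0 : C 0 = C0)
    (hrec : ∀ r : ℤ, C (r + 1) = if Even r then stepEven (C r) else stepOdd (C r)) :
    ∀ r : ℤ, ∀ j : Fin 3, C r 2 j = C (r + 4) 0 j := by
  have hstep : ∀ r, C (r + 1) = beltStep r (C r) := hrec
  have base : C 0 2 = C 4 0 := by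
    have h4 : C 4 = beltStep 3 (beltStep 2 (beltStep 1 (beltStep 0 (C 0)))) :=
      (hstep 3).trans <| congrArg (beltStep 3) <| (hstep 2).trans <|
        congrArg (beltStep 2) <| (hstep 1).trans <| congrArg (beltStep 1) (hstep 0)
    rw [h4, h0]
    decide
  have shift : ∀ r, C (r + 1) 2 = C (r + 1 + 4) 0 ↔ C r 2 = C (r + 4) 0 := fun r => by
    rw [add_right_comm, hstep, hstep, beltStep_add_four, beltStep_row_two_eq_row_zero_iff]
  intro r
  refine congrFun ?_
  induction r using Int.induction_on with
  | zero => exact base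
  | succ n ih => exact (shift n).2 ih
  | pred n ih => exact (shift (-n - 1)).1 (by simpa using ih)
end

section
/- With the degree recurrence g_3^{(r+1)} = g_3^{(r)} for r even, and g_3^{(r+1)} = -g_3^{(r)} + [C^{(r)}_{-1,3}]_-·(1,-3,-2) + 3[C^{(r)}_{-2,3}]_-·(1,0,0) + [C^{(r)}_{-3,3}]_-·(1,3,2) for r odd, starting from g_3^{(0)} = (2,3,2), the closed form holds: g_3^{(2r)} = (2+r, 3, 2) for r ≥ 0, g_3^{(-2)} = (2,0,0), and g_3^{(2r)} = (-r, -3, -2) for r < -1. -/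
theorem Int.eq_of_injective_step {α : Type*} {f g : ℤ → α} (F : ℤ → α → α)
    (hF : ∀ k, Function.Injective (F k)) (hf : ∀ k, f (k + 1) = F k (f k))
    (hg : ∀ k, g (k + 1) = F k (g k)) (h0 : f 0 = g 0) : f = g := by
  funext k
  induction k using Int.induction_on with
  | zero => exact h0
  | succ k ih => rw [hf, hg, ih]
  | pred k ih => exact hF _ (by rw [← hf, ← hg, sub_add_cancel, ih])

lemma stepEven_injective : Function.Injective stepEven := by
  intro A B h
  ext i j
  have h0 := congrFun (congrFun h i) 0
  have h1 := congrFun (congrFun h i) 1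
  have h2 := congrFun (congrFun h i) 2
  simp only [stepEven, Matrix.of_apply] at h0 h1 h2
  fin_cases j <;> simp_all

lemma stepOdd_injective : Function.Injective stepOdd := by
  intro A B h
  ext i j
  have h0 := congrFun (congrFun h i) 0
  have h1 := congrFun (congrFun h i) 1
  have h2 := congrFun (congrFun h i) 2
  simp only [stepOdd, Matrix.of_apply] at h0 h1 h2
  fin_cases j <;> simp_all

/-- `beltForm j k = C⁽⁴ᵏ⁺ʲ⁾`; the third row is the first row one period later. -/
def beltForm : Fin 4 → ℤ → Matrix (Fin 3) (Fin 3) ℤ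
  | 0, k => !![1 - |k|, -|k|, max (2 * k - 1) (-2 * k);
      -1, -1, 1;
      1 - |k + 1|, -|k + 1|, max (2 * k + 1) (-2 * k - 2)]
  | 1, k => !![|k| - 1, |k|, -max (2 * k) (-2 * k - 1);
      1, 1, -1;
      |k + 1| - 1, |k + 1|, -max (2 * k + 2) (-2 * k - 3)]
  | 2, k => !![-max (-k) (k + 1), 1 - max (-k) (k + 1), max (2 * k) (-2 * k - 1);
      0, -2, 1;
      -max (-k - 1) (k + 2), 1 - max (-k - 1) (k + 2), max (2 * k + 2) (-2 * k - 3)]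
  | 3, k => !![max (k + 1) (-k), max (k + 1) (-k) - 1, -max (2 * k + 1) (-2 * k - 2);
      0, 2, -1;
      max (k + 2) (-k - 1), max (k + 2) (-k - 1) - 1, -max (2 * k + 3) (-2 * k - 4)]

lemma stepEven_beltForm_zero (k : ℤ) : stepEven (beltForm 0 k) = beltForm 1 k := by
  ext i j
  fin_cases i <;> fin_cases j <;>
    simp [beltForm, stepEven, nPart, abs_eq_max_neg] <;> omega

lemma stepOdd_beltForm_one (k : ℤ) : stepOdd (beltForm 1 k) = beltForm 2 k := by
  ext i j
  fin_cases i <;> fin_cases j <;>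
    simp [beltForm, stepOdd, nPart, abs_eq_max_neg] <;> omega

lemma stepEven_beltForm_two (k : ℤ) : stepEven (beltForm 2 k) = beltForm 3 k := by
  ext i j
  fin_cases i <;> fin_cases j <;>
    simp [beltForm, stepEven, nPart] <;> omega

lemma stepOdd_beltForm_three (k : ℤ) : stepOdd (beltForm 3 k) = beltForm 0 (k + 1) := by
  ext i j
  fin_cases i <;> fin_cases j <;>
    simp [beltForm, stepOdd, nPart, abs_eq_max_neg] <;> omega

def g3Increment (M : Matrix (Fin 3) (Fin 3) ℤ) : ℤ × ℤ × ℤ :=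
  nPart (M 0 2) • ((1, -3, -2) : ℤ × ℤ × ℤ) + (3 * nPart (M 1 2)) • ((1, 0, 0) : ℤ × ℤ × ℤ)
    + nPart (M 2 2) • ((1, 3, 2) : ℤ × ℤ × ℤ)

def g3Form (m : ℤ) : ℤ × ℤ × ℤ :=
  if 0 ≤ m then (2 + m, 3, 2) else if m = -1 then (2, 0, 0) else (-m, -3, -2)

lemma g3Increment_beltForm_one (k : ℤ) :
    g3Increment (beltForm 1 k) = g3Form (2 * k + 1) + g3Form (2 * k) := by
  simp only [g3Increment, g3Form]
  split_ifs <;> simp [beltForm, nPart, abs_eq_max_neg] <;> omega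

lemma g3Increment_beltForm_three (k : ℤ) :
    g3Increment (beltForm 3 k) = g3Form (2 * k + 1 + 1) + g3Form (2 * k + 1) := by
  simp only [g3Increment, g3Form]
  split_ifs <;> simp [beltForm, nPart] <;> omega

def IsBipartiteBelt (C : ℤ → Matrix (Fin 3) (Fin 3) ℤ) : Prop :=
  ∀ r : ℤ, C (r + 1) = if Even r then stepEven (C r) else stepOdd (C r)

namespace IsBipartiteBelt

variable {C : ℤ → Matrix (Fin 3) (Fin 3) ℤ}

lemma succ_of_even (hC : IsBipartiteBelt C) {r : ℤ} (hr : Even r) :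
    C (r + 1) = stepEven (C r) := by
  rw [hC, if_pos hr]

lemma succ_of_odd (hC : IsBipartiteBelt C) {r : ℤ} (hr : Odd r) :
    C (r + 1) = stepOdd (C r) := by
  rw [hC, if_neg (Int.not_even_iff_odd.mpr hr)]

lemma four_mul (hC : IsBipartiteBelt C) (h0 : C 0 = C0) (k : ℤ) : C (4 * k) = beltForm 0 k := by
  have hperiod : ∀ k : ℤ,
      C (4 * (k + 1)) = (stepOdd ∘ stepEven ∘ stepOdd ∘ stepEven) (C (4 * k)) := by
    intro k
    rw [show 4 * (k + 1) = 4 * k + 1 + 1 + 1 + 1 by ring,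
      hC.succ_of_odd ⟨2 * k + 1, by ring⟩, hC.succ_of_even ⟨2 * k + 1, by ring⟩,
      hC.succ_of_odd ⟨2 * k, by ring⟩, hC.succ_of_even ⟨2 * k, by ring⟩]
    rfl
  have hform : ∀ k : ℤ,
      beltForm 0 (k + 1) = (stepOdd ∘ stepEven ∘ stepOdd ∘ stepEven) (beltForm 0 k) := by
    intro k
    simp only [Function.comp_apply, stepEven_beltForm_zero, stepOdd_beltForm_one,
      stepEven_beltForm_two, stepOdd_beltForm_three]
  have hinj : Function.Injective (stepOdd ∘ stepEven ∘ stepOdd ∘ stepEven) :=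
    stepOdd_injective.comp <| stepEven_injective.comp <| stepOdd_injective.comp stepEven_injective
  have hstart : C (4 * 0) = beltForm 0 0 := by rw [mul_zero, h0]; decide
  exact congrFun (Int.eq_of_injective_step (f := fun k ↦ C (4 * k)) _ (fun _ ↦ hinj)
    hperiod hform hstart) k

lemma four_mul_add_one (hC : IsBipartiteBelt C) (h0 : C 0 = C0) (k : ℤ) :
    C (4 * k + 1) = beltForm 1 k := by
  rw [hC.succ_of_even ⟨2 * k, by ring⟩, hC.four_mul h0, stepEven_beltForm_zero]

lemma four_mul_add_three (hC : IsBipartiteBelt C) (h0 : C 0 = C0) (k : ℤ) :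
    C (4 * k + 3) = beltForm 3 k := by
  rw [show 4 * k + 3 = 4 * k + 1 + 1 + 1 by ring, hC.succ_of_even ⟨2 * k + 1, by ring⟩,
    hC.succ_of_odd ⟨2 * k, by ring⟩, hC.four_mul_add_one h0, stepOdd_beltForm_one,
    stepEven_beltForm_two]

lemma g3Increment_odd (hC : IsBipartiteBelt C) (h0 : C 0 = C0) (m : ℤ) :
    g3Increment (C (2 * m + 1)) = g3Form (m + 1) + g3Form m := by
  obtain ⟨k, rfl | rfl⟩ := Int.even_or_odd' m
  · rw [show 2 * (2 * k) + 1 = 4 * k + 1 by ring, hC.four_mul_add_one h0, g3Increment_beltForm_one]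
  · rw [show 2 * (2 * k + 1) + 1 = 4 * k + 3 by ring, hC.four_mul_add_three h0,
      g3Increment_beltForm_three]

end IsBipartiteBelt

/-- Closed form for the degrees `g₃⁽ʳ⁾` of the cluster variables at vertex `3`
on the bipartite belt of `A(Σ̲₂)`. -/
theorem g3_closed_form (C : ℤ → Matrix (Fin 3) (Fin 3) ℤ) (h0 : C 0 = C0)
    (hrec : ∀ r : ℤ, C (r + 1) = if Even r then stepEven (C r) else stepOdd (C r))
    (g3 : ℤ → ℤ × ℤ × ℤ) (hg0 : g3 0 = (2, 3, 2))
    (hgrec : ∀ r : ℤ, g3 (r + 1) =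
      if Even r then g3 r
      else -g3 r + nPart (C r 0 2) • ((1, -3, -2) : ℤ × ℤ × ℤ)
        + (3 * nPart (C r 1 2)) • ((1, 0, 0) : ℤ × ℤ × ℤ)
        + nPart (C r 2 2) • ((1, 3, 2) : ℤ × ℤ × ℤ)) :
    (∀ r : ℤ, 0 ≤ r → g3 (2 * r) = (2 + r, 3, 2)) ∧
      g3 (-2) = (2, 0, 0) ∧
      (∀ r : ℤ, r < -1 → g3 (2 * r) = (-r, -3, -2)) := by
  have hG : ∀ m : ℤ, g3 (2 * (m + 1)) = -g3 (2 * m) + g3Increment (C (2 * m + 1)) := by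
    intro m
    rw [show 2 * (m + 1) = 2 * m + 1 + 1 by ring, hgrec, if_neg (by simp), hgrec, if_pos (by simp)]
    simp only [g3Increment, add_assoc]
  have hForm : ∀ m : ℤ, g3Form (m + 1) = -g3Form m + g3Increment (C (2 * m + 1)) := by
    intro m
    rw [IsBipartiteBelt.g3Increment_odd hrec h0]
    abel
  have hg : (fun m ↦ g3 (2 * m)) = g3Form :=
    Int.eq_of_injective_step _ (fun m ↦ (add_left_injective _).comp neg_injective) hG hForm
      (by simp [hg0, g3Form])
  refine ⟨fun r hr ↦ ?_, ?_, fun r hr ↦ ?_⟩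
  · rw [congrFun hg r, g3Form, if_pos hr]
  · rw [show (-2 : ℤ) = 2 * -1 by norm_num, congrFun hg (-1)]; rfl
  · rw [congrFun hg r, g3Form, if_neg (by omega), if_neg (by omega)]
end
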